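/- arXiv:2403.00381 — 2 statements merged into one kernel-verified Lean document; each statement's English description precedes it below -/
import Mathlib

section
/- Let D be symmetric with λ_min(D) ≥ b + b²/2 + a/2 + 1 for constants a, b ≥ 0, and let g, z₁, z₂, τ ∈ ℝⁿ with ‖τ‖² ≤ d and ‖δ‖ ≤ a‖z₁‖ + b‖z₂‖ + b‖g‖ + k. Then −gᵀg − z₂ᵀDz₂ + z₂ᵀ(τ − δ) ≤ −½‖g‖² + (a/2)‖z₁‖² + (k² + d)/2. -/
open Matrix

/-- The quadratic form `xᵀ D x` for `x` in Euclidean space. -/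
noncomputable def quadForm {n : ℕ} (D : Matrix (Fin n) (Fin n) ℝ)
    (x : EuclideanSpace ℝ (Fin n)) : ℝ :=
  (WithLp.equiv 2 (Fin n → ℝ) x) ⬝ᵥ D.mulVec (WithLp.equiv 2 (Fin n → ℝ) x)

/-- if `λ_min(D) ≥ b + b²/2 + a/2 + 1` (stated equivalently as
`xᵀDx ≥ (b + b²/2 + a/2 + 1)‖x‖²` for all `x`), `‖τ‖² ≤ d` and
`‖δ‖ ≤ a‖z₁‖ + b‖z₂‖ + b‖g‖ + k`, then
`−gᵀg − z₂ᵀDz₂ + z₂ᵀ(τ − δ) ≤ −½‖g‖² + (a/2)‖z₁‖² + (k² + d)/2`. -/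
theorem stmt11 (n : ℕ) (D : Matrix (Fin n) (Fin n) ℝ) (a b k d : ℝ)
    (ha : 0 ≤ a) (hb : 0 ≤ b) (hk : 0 ≤ k)
    (hDsym : Dᵀ = D)
    (hD : ∀ x : EuclideanSpace ℝ (Fin n),
      (b + b ^ 2 / 2 + a / 2 + 1) * ‖x‖ ^ 2 ≤ quadForm D x)
    (g z₁ z₂ τ δ : EuclideanSpace ℝ (Fin n))
    (hτ : ‖τ‖ ^ 2 ≤ d)
    (hδ : ‖δ‖ ≤ a * ‖z₁‖ + b * ‖z₂‖ + b * ‖g‖ + k) :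
    -(inner ℝ g g : ℝ) - quadForm D z₂ + (inner ℝ z₂ (τ - δ) : ℝ) ≤
      -(1 / 2 : ℝ) * ‖g‖ ^ 2 + a / 2 * ‖z₁‖ ^ 2 + (k ^ 2 + d) / 2 := by
  have hg : (inner ℝ g g : ℝ) = ‖g‖ ^ 2 := real_inner_self_eq_norm_sq g
  have h1 : (inner ℝ z₂ (τ - δ) : ℝ) ≤ ‖z₂‖ * (‖τ‖ + ‖δ‖) := by
    calc (inner ℝ z₂ (τ - δ) : ℝ) ≤ ‖z₂‖ * ‖τ - δ‖ := real_inner_le_norm _ _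
    _ ≤ ‖z₂‖ * (‖τ‖ + ‖δ‖) := by
        exact mul_le_mul_of_nonneg_left (norm_sub_le _ _) (norm_nonneg _)
  have hq := hD z₂
  have h2 : (0:ℝ) ≤ ‖z₂‖ := norm_nonneg _
  have h3 : (0:ℝ) ≤ ‖τ‖ := norm_nonneg _
  have h4 : (0:ℝ) ≤ ‖z₁‖ := norm_nonneg _
  have h5 : (0:ℝ) ≤ ‖g‖ := norm_nonneg _
  nlinarith [sq_nonneg (‖z₂‖ - ‖τ‖), sq_nonneg (‖z₂‖ - ‖z₁‖), sq_nonneg (b * ‖z₂‖ - ‖g‖), sq_nonneg (‖z₂‖ - k), mul_le_mul_of_nonneg_left hδ h2]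
end

section
/- Consider the FICNN recursion y_{i+1} = σᵢ(Wᵢ^{(y)} yᵢ + Wᵢ^{(x)} x + bᵢ) for i = 0,…,k−1 with y₀ = 0 and W₀^{(y)} = 0, where each activation σᵢ is applied componentwise, each component function is convex and nondecreasing, and each matrix Wᵢ^{(y)} (i ≥ 1) has nonnegative entries. Then each map x ↦ (y_i)_j (each component of each layer) is convex, and in particular f(x) = y_k is convex in x. -/
open Matrix

private lemma comp_convex_aux {m : ℕ} {g : (Fin m → ℝ) → ℝ} (hg : ConvexOn ℝ Set.univ g)
    {σ : ℝ → ℝ} (hσ : ConvexOn ℝ Set.univ σ) (hm : Monotone σ) :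
    ConvexOn ℝ Set.univ (fun x => σ (g x)) := by
  refine ⟨convex_univ, fun x _ y _ a c ha hc hac => ?_⟩
  calc σ (g (a • x + c • y)) ≤ σ (a * g x + c * g y) := by
        have := hg.2 (Set.mem_univ x) (Set.mem_univ y) ha hc hac
        exact hm (by simpa using this)
    _ ≤ a * σ (g x) + c * σ (g y) := by
        simpa using hσ.2 (Set.mem_univ (g x)) (Set.mem_univ (g y)) ha hc hac

private lemma affine_convex_aux {m n : ℕ} (A : Matrix (Fin m) (Fin n) ℝ) (c : ℝ) (j : Fin m) :
    ConvexOn ℝ Set.univ (fun x : Fin n → ℝ => A.mulVec x j + c) := by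
  refine ⟨convex_univ, fun x _ y _ a e ha he hae => le_of_eq ?_⟩
  simp only [Matrix.mulVec_add, Matrix.mulVec_smul, Pi.add_apply, Pi.smul_apply, smul_eq_mul]
  linear_combination -c * hae

/-- for the FICNN recursion `y_{i+1} = σᵢ(Wᵢ⁽ʸ⁾yᵢ + Wᵢ⁽ˣ⁾x + bᵢ)` with
`y₀ = 0`, `W₀⁽ʸ⁾ = 0`, componentwise convex nondecreasing activations, and entrywise
nonnegative `Wᵢ⁽ʸ⁾` for `i ≥ 1`, every component of every layer is convex in `x`;
in particular `f(x) = y_k` is convex in `x`. -/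
theorem stmt13 (n k : ℕ) (d : ℕ → ℕ)
    (Wy : (i : ℕ) → Matrix (Fin (d (i + 1))) (Fin (d i)) ℝ)
    (Wx : (i : ℕ) → Matrix (Fin (d (i + 1))) (Fin n) ℝ)
    (b : (i : ℕ) → Fin (d (i + 1)) → ℝ)
    (σ : ℕ → ℝ → ℝ)
    (hσconv : ∀ i, ConvexOn ℝ Set.univ (σ i))
    (hσmono : ∀ i, Monotone (σ i))
    (hWy0 : Wy 0 = 0)
    (hWynonneg : ∀ i, 1 ≤ i → ∀ (p : Fin (d (i + 1))) (q : Fin (d i)), 0 ≤ Wy i p q)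
    (y : (i : ℕ) → (Fin n → ℝ) → Fin (d i) → ℝ)
    (hy0 : ∀ x, y 0 x = 0)
    (hrec : ∀ i, i < k → ∀ (x : Fin n → ℝ) (j : Fin (d (i + 1))),
      y (i + 1) x j = σ i ((Wy i).mulVec (y i x) j + (Wx i).mulVec x j + b i j)) :
    ∀ i, i ≤ k → ∀ j : Fin (d i), ConvexOn ℝ Set.univ (fun x : Fin n → ℝ => y i x j) := by
  intro i
  induction i with
  | zero =>
      intro _ j
      simp only [hy0]
      exact convexOn_const 0 convex_univ
  | succ i ih =>
      intro hik j
      have hlt : i < k := Nat.lt_of_succ_le hik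
      have ih' := ih (Nat.le_of_lt hlt)
      have hnn : ∀ (p : Fin (d (i + 1))) (q : Fin (d i)), 0 ≤ Wy i p q := by
        rcases Nat.eq_zero_or_pos i with h0 | hpos
        · subst h0; intro p q; rw [hWy0]; simp
        · exact hWynonneg i hpos
      have hsum : ConvexOn ℝ Set.univ
          (fun x : Fin n → ℝ => ∑ q, Wy i j q * y i x q) := by
        have heq : (fun x : Fin n → ℝ => ∑ q, Wy i j q * y i x q)
            = ∑ q, (fun x : Fin n → ℝ => Wy i j q * y i x q) := by
          funext x; simp
        rw [heq]
        apply Finset.sum_induction _ (fun f : (Fin n → ℝ) → ℝ => ConvexOn ℝ Set.univ f)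
          (fun f g hf hg => hf.add hg)
          (convexOn_const 0 convex_univ)
        intro q _
        simpa [smul_eq_mul] using ConvexOn.smul (hnn j q) (ih' q)
      have haff := affine_convex_aux (Wx i) (b i j) j
      have hinner : ConvexOn ℝ Set.univ
          (fun x : Fin n → ℝ => (Wy i).mulVec (y i x) j + (Wx i).mulVec x j + b i j) := by
        have := hsum.add haff
        convert this using 2 with x
        · rfl
        simp [Matrix.mulVec, dotProduct]
        ring
      have := comp_convex_aux hinner (hσconv i) (hσmono i)
      simpa only [hrec i hlt] using this
end
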